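/- Let (A, ∘, •) be a totally compatible di-algebra over a commutative ring k. Given x₀ ∈ A, a list x₁, …, x_n of elements of A, and a list of n symbols each equal to ∘ or •, form the left-associated product (⋯((x₀ op₁ x₁) op₂ x₂) ⋯ opₙ xₙ). Then the result depends only on the number of occurrences of ∘ among op₁, …, opₙ: if two sequences of n operations (each ∘ or •) contain the same number of ∘'s, the corresponding left-associated products of x₀, x₁, …, xₙ are equal. -/
import Mathlib


/-- A pair of `k`-bilinear operations `a` ("∘") and `b` ("•") on a `k`-module `A`
is a *totally compatible di-algebra structure* if `a` and `b` are each associative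
and `(x∘y)•z = x∘(y•z) = (x•y)∘z = x•(y∘z)` for all `x y z`. -/
def IsTotallyCompatibleDialgebra {k A : Type*} [CommRing k] [AddCommGroup A] [Module k A]
    (a b : A →ₗ[k] A →ₗ[k] A) : Prop :=
  (∀ x y z : A, a (a x y) z = a x (a y z)) ∧
  (∀ x y z : A, b (b x y) z = b x (b y z)) ∧
  (∀ x y z : A, b (a x y) z = a x (b y z)) ∧
  (∀ x y z : A, a x (b y z) = a (b x y) z) ∧
  (∀ x y z : A, a (b x y) z = b x (a y z))

/-- The left-associated product `(⋯((x₀ op₁ x₁) op₂ x₂) ⋯ opₙ xₙ)`, where the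
operations are recorded as booleans paired with the elements: `true` stands for
the operation `a` ("∘") and `false` for `b` ("•"). -/
def leftAssocProd {k A : Type*} [CommRing k] [AddCommGroup A] [Module k A]
    (a b : A →ₗ[k] A →ₗ[k] A) (x₀ : A) (l : List (Bool × A)) : A :=
  l.foldl (fun acc p => if p.1 then a acc p.2 else b acc p.2) x₀

/-- Swapping two adjacent operation symbols acting on the same elements
does not change the value. -/
lemma op_swap {k A : Type*} [CommRing k] [AddCommGroup A] [Module k A]
    (a b : A →ₗ[k] A →ₗ[k] A) (h : IsTotallyCompatibleDialgebra a b)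
    (o₁ o₂ : Bool) (x y z : A) :
    (if o₂ = true then a (if o₁ = true then a x y else b x y) z
      else b (if o₁ = true then a x y else b x y) z)
    = (if o₁ = true then a (if o₂ = true then a x y else b x y) z
      else b (if o₂ = true then a x y else b x y) z) := by
  obtain ⟨_, _, h3, h4, _⟩ := h
  cases o₁ <;> cases o₂ <;> simp
  · exact ((h3 x y z).trans (h4 x y z)).symm
  · exact (h3 x y z).trans (h4 x y z)

lemma count_true_add_count_false (l : List Bool) :
    l.count true + l.count false = l.length := by
  induction l with
  | nil => simp
  | cons o t ih => cases o <;> simp [List.count_cons] <;> omega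

lemma leftAssocProd_perm {k A : Type*} [CommRing k] [AddCommGroup A] [Module k A]
    (a b : A →ₗ[k] A →ₗ[k] A) (h : IsTotallyCompatibleDialgebra a b)
    {ops₁ ops₂ : List Bool} (hp : ops₁.Perm ops₂) :
    ∀ (x₀ : A) (xs : List A), ops₁.length ≤ xs.length →
    leftAssocProd a b x₀ (ops₁.zip xs) = leftAssocProd a b x₀ (ops₂.zip xs) := by
  induction hp with
  | nil => intro _ _ _; rfl
  | cons o htl ih =>
    intro x₀ xs hlen
    cases xs with
    | nil => simp at hlen
    | cons x xs' =>
      simp only [List.zip_cons_cons, leftAssocProd, List.foldl_cons]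
      exact ih _ xs' (by simpa using hlen)
  | swap o₁ o₂ t =>
    intro x₀ xs hlen
    match xs with
    | x :: y :: xs' =>
      simp only [List.zip_cons_cons, leftAssocProd, List.foldl_cons]
      congr 1
      exact op_swap a b h o₂ o₁ x₀ x y
  | trans p₁ p₂ ih₁ ih₂ =>
    intro x₀ xs hlen
    exact (ih₁ x₀ xs hlen).trans (ih₂ x₀ xs (p₁.length_eq ▸ hlen))

/-- In a totally compatible di-algebra, a left-associated product of
`x₀, x₁, …, xₙ` depends only on the number of occurrences of `∘` among the `n`
operations used: if two sequences of operations of length `n` (each `∘` or `•`)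
have the same number of `∘`'s, the corresponding products coincide. -/
theorem leftAssocProd_depends_only_on_count
    {k A : Type*} [CommRing k] [AddCommGroup A] [Module k A]
    (a b : A →ₗ[k] A →ₗ[k] A) (h : IsTotallyCompatibleDialgebra a b)
    (x₀ : A) (xs : List A) (ops₁ ops₂ : List Bool)
    (h₁ : ops₁.length = xs.length) (h₂ : ops₂.length = xs.length)
    (hcount : ops₁.count true = ops₂.count true) :
    leftAssocProd a b x₀ (ops₁.zip xs) = leftAssocProd a b x₀ (ops₂.zip xs) := by
  have hperm : ops₁.Perm ops₂ := by
    rw [List.perm_iff_count]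
    intro o
    cases o
    · have c₁ := count_true_add_count_false ops₁
      have c₂ := count_true_add_count_false ops₂
      omega
    · exact hcount
  exact leftAssocProd_perm a b h hperm x₀ xs h₁.le
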